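/- arXiv:1601.07888 — 7 statements merged into one kernel-verified Lean document; each statement's English description precedes it below -/
import Mathlib

section
/- Let Λ = e^{Ah}, Θ = e^{-AΔ} - I, and F_Δ = [[-ΛΘ, -ΛΘ],[Λ(I+Θ), Λ(I+Θ)]] ∈ ℝ^{2n×2n}. With T = [[-Θ, -I],[I+Θ, I]], the similarity transform satisfies T^{-1} F_Δ T = [[Λ, 0],[0, 0]]. In particular the eigenvalues of F_Δ are those of e^{Ah} together with n zeros. -/
/-!
`F_Δ` is the column `[-ΛΘ; Λ(I+Θ)]` times the row `[I, I]`, and that row maps the columns of `T`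
to `[I, 0]`. Hence `F_Δ T = [[-ΛΘ, 0], [Λ(I+Θ), 0]]`, and applying the explicit inverse
`T⁻¹ = [[I, I], [-(I+Θ), -Θ]]` leaves `Λ` in the corner, up to the commutator of `Λ` and `Θ`, which
vanishes because both are functions of `A`. The characteristic polynomial is then that of the
block-triangular matrix `[[Λ, 0], [0, 0]]`.
-/

open Matrix Polynomial

namespace Matrix

variable {m α : Type*} [Fintype m] [DecidableEq m] [Ring α]

theorem fromBlocks_neg_neg_one_mul_fromBlocks_one_one (Θ : Matrix m m α) :
    fromBlocks (-Θ) (-1) (1 + Θ) 1 * fromBlocks 1 1 (-(1 + Θ)) (-Θ) = 1 := by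
  rw [fromBlocks_multiply, ← fromBlocks_one]
  congr 1 <;> noncomm_ring

theorem fromBlocks_conj_of_commute {Λ Θ : Matrix m m α} (hΛΘ : Commute Λ Θ) :
    fromBlocks 1 1 (-(1 + Θ)) (-Θ)
        * fromBlocks (-(Λ * Θ)) (-(Λ * Θ)) (Λ * (1 + Θ)) (Λ * (1 + Θ))
        * fromBlocks (-Θ) (-1) (1 + Θ) 1
      = fromBlocks Λ 0 0 (0 : Matrix m m α) := by
  have hFT : fromBlocks (-(Λ * Θ)) (-(Λ * Θ)) (Λ * (1 + Θ)) (Λ * (1 + Θ))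
        * fromBlocks (-Θ) (-1) (1 + Θ) 1
      = fromBlocks (-(Λ * Θ)) 0 (Λ * (1 + Θ)) (0 : Matrix m m α) := by
    rw [fromBlocks_multiply]
    congr 1 <;> noncomm_ring
  rw [mul_assoc, hFT, fromBlocks_multiply]
  congr 1
  · noncomm_ring
  · simp
  · calc -(1 + Θ) * -(Λ * Θ) + -Θ * (Λ * (1 + Θ)) = Λ * Θ - Θ * Λ := by noncomm_ring
      _ = 0 := sub_eq_zero.mpr hΛΘ.eq
  · simp

end Matrix

/-- With `Λ = e^{Ah}`, `Θ = e^{-AΔ} - I`, `F_Δ = [[-ΛΘ, -ΛΘ],[Λ(I+Θ), Λ(I+Θ)]]` and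
`T = [[-Θ, -I],[I+Θ, I]]`, we have `T⁻¹ * F_Δ * T = [[Λ, 0],[0, 0]]`; in particular
the characteristic polynomial of `F_Δ` is that of `Λ = e^{Ah}` times `X^n`, i.e. the
eigenvalues of `F_Δ` are those of `e^{Ah}` together with `n` zeros. -/
theorem similarity_F_Delta {n : ℕ} (A : Matrix (Fin n) (Fin n) ℝ) (h Δ : ℝ)
    (Λ Θ : Matrix (Fin n) (Fin n) ℝ)
    (hΛ : Λ = NormedSpace.exp (h • A)) (hΘ : Θ = NormedSpace.exp ((-Δ) • A) - 1)
    (F T : Matrix (Fin n ⊕ Fin n) (Fin n ⊕ Fin n) ℝ)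
    (hF : F = Matrix.fromBlocks (-(Λ * Θ)) (-(Λ * Θ)) (Λ * (1 + Θ)) (Λ * (1 + Θ)))
    (hT : T = Matrix.fromBlocks (-Θ) (-1) (1 + Θ) 1) :
    T⁻¹ * F * T = Matrix.fromBlocks Λ 0 0 0
      ∧ F.charpoly = Λ.charpoly * X ^ n := by
  have hΛΘ : Commute Λ Θ := by
    rw [hΛ, hΘ]
    exact (((Commute.refl A).smul_left h).smul_right (-Δ)).exp.sub_right (Commute.one_right _)
  have hTS := fromBlocks_neg_neg_one_mul_fromBlocks_one_one Θ
  have hconj := fromBlocks_conj_of_commute hΛΘ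
  rw [← hF, ← hT] at hconj
  rw [← hT] at hTS
  have hcharpoly : F.charpoly = Λ.charpoly * X ^ n := by
    rw [← one_mul F, ← hTS, mul_assoc, charpoly_mul_comm, hconj, charpoly_fromBlocks_zero₂₁,
      charpoly_zero, Fintype.card_fin]
  rw [inv_eq_right_inv hTS]
  exact ⟨hconj, hcharpoly⟩
end

section
/- Let λ > 1 and θ real with λθ such that the 2×2 matrix M(K) = [[-λθ, -λθ(1-K)],[λ(1+θ), λ(1+θ)(1-K)+K]]. Then M(K) is Schur stable if and only if the three Jury inequalities hold: (λ-1)(K-1) > 0, λθK + 1 > 0, and 2λθK + (λ-1)K - λ - 1 < 0. -/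
/-!
For `p(z) = z² + a₁z + a₀` with real coefficients, the Jury conditions are `p(1) > 0`,
`p(-1) > 0` and `|p(0)| < 1`. If every root lies in the unit disc, `p(0)` is the product of the
two roots, and `p(1) ≤ 0` would give a real root `≥ 1` (`p(-1)` is the same after `z ↦ -z`).
Conversely, a real root `x ≥ 1` with `p(1) > 0` forces the other root `-a₁ - x` to be `> 1`
too, contradicting `p(0) < 1`; a non-real root has real part `-a₁/2`, hence `|z|² = p(0)`.
For `M(K)` the trace is `λ - λ(1+θ)K + K` and the determinant `-λθK`, and the three Jury
conditions become the stated ones.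
-/

open Matrix Polynomial

section Quadratic

variable {a₁ a₀ : ℝ}

lemma lt_one_of_quadratic_eq_zero {x : ℝ} (hx : x ^ 2 + a₁ * x + a₀ = 0) (ha₀ : a₀ < 1)
    (hone : 0 < 1 + a₁ + a₀) : x < 1 := by
  by_contra! hx₁
  nlinarith [mul_nonneg (sub_nonneg.2 hx₁) (sub_nonneg.2 hx₁)]

lemma exists_quadratic_eq_zero_one_le (hone : 1 + a₁ + a₀ ≤ 0) :
    ∃ x : ℝ, 1 ≤ x ∧ x ^ 2 + a₁ * x + a₀ = 0 := by
  have hD : 0 ≤ a₁ ^ 2 - 4 * a₀ := by nlinarith [sq_nonneg (2 + a₁)]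
  have hs : 2 + a₁ ≤ √(a₁ ^ 2 - 4 * a₀) :=
    (le_abs_self _).trans (Real.abs_le_sqrt (by nlinarith))
  refine ⟨(-a₁ + √(a₁ ^ 2 - 4 * a₀)) / 2, by linarith, ?_⟩
  linear_combination (1 / 4 : ℝ) * Real.sq_sqrt hD

lemma norm_lt_one_of_quadratic_eq_zero {z : ℂ} (hz : z ^ 2 + a₁ * z + a₀ = 0)
    (ha₀ : a₀ < 1) (hone : 0 < 1 + a₁ + a₀) (hnegone : 0 < 1 - a₁ + a₀) : ‖z‖ < 1 := by
  have hre : z.re ^ 2 - z.im ^ 2 + a₁ * z.re + a₀ = 0 := by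
    simpa [sq] using congrArg Complex.re hz
  have him : z.im * (2 * z.re + a₁) = 0 := by
    have := congrArg Complex.im hz
    simp only [sq, Complex.add_im, Complex.mul_im, Complex.ofReal_re, Complex.ofReal_im,
      Complex.zero_im] at this
    linear_combination this
  rw [← sq_lt_one_iff₀ (norm_nonneg z), Complex.sq_norm, Complex.normSq_apply]
  rcases mul_eq_zero.1 him with him | hre'
  · have hlt := lt_one_of_quadratic_eq_zero (by simpa [him] using hre) ha₀ hone
    have hgt := lt_one_of_quadratic_eq_zero (a₁ := -a₁) (x := -z.re)
      (by simpa [him] using hre) ha₀ (by linarith)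
    rw [him]
    nlinarith
  · nlinarith

lemma one_add_add_pos_of_norm_lt_one (h : ∀ z : ℂ, z ^ 2 + a₁ * z + a₀ = 0 → ‖z‖ < 1) :
    0 < 1 + a₁ + a₀ := by
  by_contra! hone
  obtain ⟨x, hx₁, hx⟩ := exists_quadratic_eq_zero_one_le hone
  have := h x (by exact_mod_cast hx)
  rw [Complex.norm_real, Real.norm_eq_abs] at this
  linarith [le_abs_self x]

lemma abs_lt_one_of_norm_lt_one (h : ∀ z : ℂ, z ^ 2 + a₁ * z + a₀ = 0 → ‖z‖ < 1) :
    |a₀| < 1 := by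
  obtain ⟨s, hs⟩ := IsAlgClosed.exists_eq_mul_self ((a₁ : ℂ) ^ 2 - 4 * a₀)
  have hr₁ := h ((-a₁ + s) / 2) (by linear_combination (-1 / 4 : ℂ) * hs)
  have hr₂ := h ((-a₁ - s) / 2) (by linear_combination (-1 / 4 : ℂ) * hs)
  have hvieta : (a₀ : ℂ) = (-a₁ + s) / 2 * ((-a₁ - s) / 2) := by
    linear_combination (-1 / 4 : ℂ) * hs
  rw [← Real.norm_eq_abs, ← Complex.norm_real, hvieta, norm_mul]
  exact mul_lt_one_of_nonneg_of_lt_one_left (norm_nonneg _) hr₁ hr₂.le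

theorem quadratic_roots_norm_lt_one_iff :
    (∀ z : ℂ, z ^ 2 + a₁ * z + a₀ = 0 → ‖z‖ < 1) ↔
      |a₀| < 1 ∧ 0 < 1 + a₁ + a₀ ∧ 0 < 1 - a₁ + a₀ := by
  refine ⟨fun h ↦ ⟨abs_lt_one_of_norm_lt_one h, one_add_add_pos_of_norm_lt_one h, ?_⟩,
    fun ⟨ha₀, hone, hnegone⟩ z hz ↦
      norm_lt_one_of_quadratic_eq_zero hz (abs_lt.1 ha₀).2 hone hnegone⟩
  -- `z ↦ -z` turns the condition at `-1` into the one at `1`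
  have := one_add_add_pos_of_norm_lt_one (a₁ := -a₁) (a₀ := a₀) fun z hz ↦ by
    simpa using h (-z) (by push_cast at hz; linear_combination hz)
  linarith

end Quadratic

lemma isRoot_charpoly_map_ofReal_iff (M : Matrix (Fin 2) (Fin 2) ℝ) (z : ℂ) :
    (M.map Complex.ofReal).charpoly.IsRoot z ↔
      z ^ 2 + ((-M.trace : ℝ) : ℂ) * z + (M.det : ℂ) = 0 := by
  rw [charpoly_fin_two]
  simp [trace_fin_two, det_fin_two]
  ring_nf

theorem schur_stable_fin_two_iff (M : Matrix (Fin 2) (Fin 2) ℝ) :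
    (∀ z : ℂ, (M.map Complex.ofReal).charpoly.IsRoot z → ‖z‖ < 1) ↔
      |M.det| < 1 ∧ 0 < 1 - M.trace + M.det ∧ 0 < 1 + M.trace + M.det := by
  simp_rw [isRoot_charpoly_map_ofReal_iff, quadratic_roots_norm_lt_one_iff, sub_eq_add_neg,
    neg_neg]

theorem static_gain_jury_general (lam θ K : ℝ)
    (M : Matrix (Fin 2) (Fin 2) ℝ)
    (hM : M = Matrix.of ![![-(lam * θ), -(lam * θ) * (1 - K)],
                          ![lam * (1 + θ), lam * (1 + θ) * (1 - K) + K]]) :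
    (∀ z : ℂ, ((M.map (Complex.ofReal)).charpoly).IsRoot z → ‖z‖ < 1)
      ↔ ((lam - 1) * (K - 1) > 0 ∧ lam * θ * K + 1 > 0
          ∧ 2 * lam * θ * K + (lam - 1) * K - lam - 1 < 0) := by
  rw [schur_stable_fin_two_iff, hM, det_fin_two_of, trace_fin_two_of, abs_lt]
  constructor
  · rintro ⟨⟨-, hdet⟩, hone, hnegone⟩
    refine ⟨?_, ?_, ?_⟩ <;> linarith
  · rintro ⟨hone, hdet, hnegone⟩
    refine ⟨⟨?_, ?_⟩, ?_, ?_⟩ <;> linarith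

/-- Jury criterion for the closed loop with a static gain `K`: the matrix
`M(K) = [[-λθ, -λθ(1-K)],[λ(1+θ), λ(1+θ)(1-K)+K]]` is Schur stable (all complex
eigenvalues in the open unit disc) iff `(λ-1)(K-1) > 0`, `λθK + 1 > 0` and
`2λθK + (λ-1)K - λ - 1 < 0`. -/
theorem static_gain_jury (lam θ K : ℝ) (hlam : 1 < lam)
    (M : Matrix (Fin 2) (Fin 2) ℝ)
    (hM : M = Matrix.of ![![-(lam * θ), -(lam * θ) * (1 - K)],
                          ![lam * (1 + θ), lam * (1 + θ) * (1 - K) + K]]) :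
    (∀ z : ℂ, ((M.map (Complex.ofReal)).charpoly).IsRoot z → ‖z‖ < 1)
      ↔ ((lam - 1) * (K - 1) > 0 ∧ lam * θ * K + 1 > 0
          ∧ 2 * lam * θ * K + (lam - 1) * K - lam - 1 < 0) :=
  static_gain_jury_general lam θ K M hM
end

section
/- Let λ > 1. There exists K ∈ ℝ with K > 1 such that λθK + 1 > 0 and 2λθK + (λ-1)K - λ - 1 < 0 hold for all θ in a closed interval S ⊂ (e^{-ah}-1, e^{ah}-1) if and only if S ⊂ (-1/λ, 1/λ). -/
open Real

/-- With `λ = e^{ah}` (`a, h > 0`), there exists a static gain `K > 1` satisfying the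
Jury conditions `λθK + 1 > 0` and `2λθK + (λ-1)K - λ - 1 < 0` for all `θ` in a closed
interval `S = [θ̲, θ̄] ⊂ (e^{-ah}-1, e^{ah}-1)` if and only if `S ⊂ (-1/λ, 1/λ)`. -/
theorem static_controller_exact_bound (a h : ℝ) (ha : 0 < a) (hh : 0 < h)
    (θlo θhi : ℝ) (hle : θlo ≤ θhi)
    (hS : Set.Icc θlo θhi ⊆ Set.Ioo (Real.exp (-(a * h)) - 1) (Real.exp (a * h) - 1)) :
    (∃ K : ℝ, K > 1 ∧ ∀ θ ∈ Set.Icc θlo θhi,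
        Real.exp (a * h) * θ * K + 1 > 0
          ∧ 2 * Real.exp (a * h) * θ * K + (Real.exp (a * h) - 1) * K - Real.exp (a * h) - 1 < 0)
      ↔ Set.Icc θlo θhi ⊆ Set.Ioo (-(1 / Real.exp (a * h))) (1 / Real.exp (a * h)) := by
  set l : ℝ := Real.exp (a * h) with hldef
  have hl1 : 1 < l := by
    have h1 : a * h + 1 < Real.exp (a * h) :=
      Real.add_one_lt_exp (ne_of_gt (mul_pos ha hh))
    have := mul_pos ha hh
    simp only [hldef]; linarith
  have hlpos : (0 : ℝ) < l := by linarith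
  have hinv : l * (1 / l) = 1 := mul_one_div_cancel hlpos.ne'
  constructor
  · rintro ⟨K, hK, hall⟩ θ hθ
    obtain ⟨h1, h2⟩ := hall θ hθ
    have hKpos : (0 : ℝ) < K := by linarith
    constructor
    · by_contra hc
      push_neg at hc
      have hle' : l * θ ≤ -1 := by
        have := mul_le_mul_of_nonneg_left hc hlpos.le
        rw [mul_neg, hinv] at this
        linarith
      nlinarith [mul_le_mul_of_nonneg_right hle' hKpos.le]
    · by_contra hc
      push_neg at hc
      have hge' : (1 : ℝ) ≤ l * θ := by
        have := mul_le_mul_of_nonneg_left hc hlpos.le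
        rw [hinv] at this
        linarith
      nlinarith [mul_le_mul_of_nonneg_right hge' hKpos.le]
  · intro hsub
    obtain ⟨hlo, _⟩ := hsub ⟨le_refl θlo, hle⟩
    obtain ⟨_, hhi⟩ := hsub ⟨hle, le_refl θhi⟩
    have hlθlo : -1 < l * θlo := by
      have := mul_lt_mul_of_pos_left hlo hlpos
      rw [mul_neg, hinv] at this
      linarith
    have hlθhi : l * θhi < 1 := by
      have := mul_lt_mul_of_pos_left hhi hlpos
      rw [hinv] at this
      linarith
    set ε : ℝ := min (1 + l * θlo) (2 - 2 * l * θhi) / (2 * (l + 1)) with hεdef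
    have hεpos : 0 < ε :=
      div_pos (lt_min (by linarith) (by linarith)) (by linarith)
    have hεle1 : ε * (2 * (l + 1)) ≤ 1 + l * θlo := by
      rw [hεdef, div_mul_cancel₀]
      · exact min_le_left _ _
      · positivity
    have hεle2 : ε * (2 * (l + 1)) ≤ 2 - 2 * l * θhi := by
      rw [hεdef, div_mul_cancel₀]
      · exact min_le_right _ _
      · positivity
    refine ⟨1 + ε, by linarith, fun θ hθ => ?_⟩
    obtain ⟨hθ1, hθ2⟩ := hθ
    have hKpos : (0 : ℝ) < 1 + ε := by linarith
    constructor
    · have hlo' : l * θlo * (1 + ε) + 1 > 0 := by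
        nlinarith [mul_lt_mul_of_pos_right hlθlo hεpos]
      have hmono : l * θlo * (1 + ε) ≤ l * θ * (1 + ε) := by
        have := mul_le_mul_of_nonneg_right hθ1 (mul_pos hlpos hKpos).le
        nlinarith
      linarith
    · have hhi' : 2 * l * θhi * (1 + ε) + (l - 1) * (1 + ε) - l - 1 < 0 := by
        nlinarith [mul_lt_mul_of_pos_left (show 2 * l * θhi + l - 1 < l + 1 by linarith) hεpos]
      have hmono : 2 * l * θ * (1 + ε) ≤ 2 * l * θhi * (1 + ε) := by
        have := mul_le_mul_of_nonneg_right hθ2 (mul_pos hlpos hKpos).le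
        nlinarith
      linarith
end

section
/- For every real λ > 1, defining κ := (√(λ²+1)·√(λ²-4√2+5) - 2(√2-1)λ)/(λ²-1), the strict inequalities 1/λ < 1/(λκ) < 2λ/(λ²+1) hold; in particular 1/λ < κ < 1. -/
/-!
Write `s = √2`, `d = λ² - 1` and `Q = (λ² + 1)(λ² - 4s + 5)`, so that `κ d = √Q - 2(s - 1)λ`.
Each of `κ < 1`, `λκ > 1` and `2λ²κ > λ² + 1` is a strict comparison between `√Q` (times a
power of `λ`) and a polynomial in `λ` and `s`; squaring, the gaps are the polynomials
`4(s - 1)(λ - 1)²(λ + 1)`, `(λ² - 1)³` and `(λ - 1)³ · p(λ)` with `p` having positive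
coefficients (as `8s < 17`), all positive for `λ > 1`. The reciprocal bounds follow.
-/

open Real

lemma lt_mul_sqrt_of_sq_lt_sq_mul {a b x : ℝ} (hb : 0 ≤ b) (h : a ^ 2 < b ^ 2 * x) :
    a < b * √x := calc
  a ≤ |a| := le_abs_self a
  _ = √(a ^ 2) := (sqrt_sq_eq_abs a).symm
  _ < √(b ^ 2 * x) := sqrt_lt_sqrt (sq_nonneg a) h
  _ = b * √x := by rw [sqrt_mul (sq_nonneg b), sqrt_sq hb]

noncomputable def kappaRadicand (lam : ℝ) : ℝ := (lam ^ 2 + 1) * (lam ^ 2 - 4 * √2 + 5)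

noncomputable def kappa (lam : ℝ) : ℝ :=
  (√(lam ^ 2 + 1) * √(lam ^ 2 - 4 * √2 + 5) - 2 * (√2 - 1) * lam) / (lam ^ 2 - 1)

lemma kappa_eq (lam : ℝ) :
    kappa lam = (√(kappaRadicand lam) - 2 * (√2 - 1) * lam) / (lam ^ 2 - 1) := by
  rw [kappa, kappaRadicand, sqrt_mul (by positivity)]

section

variable {lam : ℝ}

lemma sqrt_kappaRadicand_lt (hlam : 1 < lam) :
    √(kappaRadicand lam) < lam ^ 2 - 1 + 2 * (√2 - 1) * lam := by
  have hs : 1 < √2 := one_lt_sqrt_two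
  have hgap : 0 < 4 * (√2 - 1) * (lam - 1) ^ 2 * (lam + 1) := by
    have : 0 < √2 - 1 := by linarith
    have : 0 < lam - 1 := by linarith
    positivity
  have hid : (lam ^ 2 - 1 + 2 * (√2 - 1) * lam) ^ 2
      = kappaRadicand lam + 4 * (√2 - 1) * (lam - 1) ^ 2 * (lam + 1) := by
    rw [kappaRadicand]
    linear_combination 4 * lam ^ 2 * sq_sqrt (zero_le_two (α := ℝ))
  rw [sqrt_lt' (by nlinarith), hid]
  linarith

lemma lt_mul_sqrt_kappaRadicand (hlam : 1 < lam) :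
    lam ^ 2 - 1 + 2 * (√2 - 1) * lam ^ 2 < lam * √(kappaRadicand lam) := by
  apply lt_mul_sqrt_of_sq_lt_sq_mul (by linarith)
  have hgap : 0 < (lam ^ 2 - 1) ^ 3 := pow_pos (by nlinarith) 3
  have hid : lam ^ 2 * kappaRadicand lam
      = (lam ^ 2 - 1 + 2 * (√2 - 1) * lam ^ 2) ^ 2 + (lam ^ 2 - 1) ^ 3 := by
    rw [kappaRadicand]
    linear_combination -4 * lam ^ 4 * sq_sqrt (zero_le_two (α := ℝ))
  rw [hid]
  linarith

lemma lt_two_mul_sq_mul_sqrt_kappaRadicand (hlam : 1 < lam) :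
    lam ^ 4 - 1 + 4 * (√2 - 1) * lam ^ 3 < 2 * lam ^ 2 * √(kappaRadicand lam) := by
  apply lt_mul_sqrt_of_sq_lt_sq_mul (by positivity)
  have hs : √2 < 3 / 2 := sqrt_two_lt_three_halves
  have hlam0 : 0 < lam := by linarith
  have hp : 0 < 3 * lam ^ 5 + (17 - 8 * √2) * lam ^ 4 + (18 - 8 * √2) * lam ^ 3
      + 6 * lam ^ 2 + 3 * lam + 1 := by
    have : 0 < 17 - 8 * √2 := by linarith
    have : 0 < 18 - 8 * √2 := by linarith
    positivity
  have hgap := mul_pos (pow_pos (sub_pos.mpr hlam) 3) hp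
  have hid : (2 * lam ^ 2) ^ 2 * kappaRadicand lam
      = (lam ^ 4 - 1 + 4 * (√2 - 1) * lam ^ 3) ^ 2 + (lam - 1) ^ 3 * (3 * lam ^ 5
        + (17 - 8 * √2) * lam ^ 4 + (18 - 8 * √2) * lam ^ 3 + 6 * lam ^ 2 + 3 * lam + 1) := by
    rw [kappaRadicand]
    linear_combination -16 * lam ^ 6 * sq_sqrt (zero_le_two (α := ℝ))
  rw [hid]
  linarith

lemma kappa_lt_one (hlam : 1 < lam) : kappa lam < 1 := by
  rw [kappa_eq, div_lt_one (by nlinarith)]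
  linarith [sqrt_kappaRadicand_lt hlam]

lemma one_lt_mul_kappa (hlam : 1 < lam) : 1 < lam * kappa lam := by
  rw [kappa_eq, mul_div_assoc', one_lt_div (by nlinarith)]
  linarith [lt_mul_sqrt_kappaRadicand hlam]

lemma sq_add_one_lt_two_mul_sq_mul_kappa (hlam : 1 < lam) :
    lam ^ 2 + 1 < 2 * lam ^ 2 * kappa lam := by
  rw [kappa_eq, mul_div_assoc', lt_div_iff₀ (by nlinarith)]
  linarith [lt_two_mul_sq_mul_sqrt_kappaRadicand hlam]

end

/-- For every `λ > 1`, with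
`κ = (√(λ²+1)·√(λ²-4√2+5) - 2(√2-1)λ)/(λ²-1)`, we have
`1/λ < 1/(λκ) < 2λ/(λ²+1)`, and in particular `1/λ < κ < 1`. -/
theorem kappa_bounds (lam : ℝ) (hlam : 1 < lam)
    (κ : ℝ)
    (hκ : κ = (Real.sqrt (lam ^ 2 + 1) * Real.sqrt (lam ^ 2 - 4 * Real.sqrt 2 + 5)
        - 2 * (Real.sqrt 2 - 1) * lam) / (lam ^ 2 - 1)) :
    1 / lam < 1 / (lam * κ) ∧ 1 / (lam * κ) < 2 * lam / (lam ^ 2 + 1)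
      ∧ 1 / lam < κ ∧ κ < 1 := by
  have hκ : κ = kappa lam := hκ
  have hlt : κ < 1 := hκ ▸ kappa_lt_one hlam
  have hgt : 1 < lam * κ := hκ ▸ one_lt_mul_kappa hlam
  have hgt' : lam ^ 2 + 1 < 2 * lam ^ 2 * κ := hκ ▸ sq_add_one_lt_two_mul_sq_mul_kappa hlam
  have hlam0 : 0 < lam := by linarith
  refine ⟨?_, ?_, ?_, hlt⟩
  · exact one_div_lt_one_div_of_lt (by linarith) (by nlinarith)
  · rw [div_lt_div_iff₀ (by linarith) (by positivity)]
    linarith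
  · rw [div_lt_iff₀ hlam0]
    linarith
end

section
/- Let λ > 1 and let θ̲ < 0 < θ̄ with θ̲ > -1. Then the inequality λ²|1 - √((1+θ̄)/(1+θ̲))|² < |1 + √((1+θ̄)/(1+θ̲))|² holds if and only if (λ-1)²θ̄ - (λ+1)²θ̲ < 4λ. -/
open Real

/-- For `λ > 1` and `-1 < θ̲ < 0 < θ̄`, the inequality
`λ²|1 - √((1+θ̄)/(1+θ̲))|² < |1 + √((1+θ̄)/(1+θ̲))|²` holds iff
`(λ-1)²θ̄ - (λ+1)²θ̲ < 4λ`. -/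
theorem pick_condition_iff (lam θlo θhi : ℝ) (hlam : 1 < lam)
    (hlo : -1 < θlo) (hlo0 : θlo < 0) (hhi : 0 < θhi) :
    lam ^ 2 * |1 - Real.sqrt ((1 + θhi) / (1 + θlo))| ^ 2
        < |1 + Real.sqrt ((1 + θhi) / (1 + θlo))| ^ 2
      ↔ (lam - 1) ^ 2 * θhi - (lam + 1) ^ 2 * θlo < 4 * lam := by
  have ha : (0:ℝ) < 1 + θlo := by linarith
  have hb : (0:ℝ) < 1 + θhi := by linarith
  set s := Real.sqrt ((1 + θhi) / (1 + θlo)) with hs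
  have hr : (1:ℝ) < (1 + θhi) / (1 + θlo) := by
    rw [lt_div_iff₀ ha]; linarith
  have hs0 : 0 ≤ s := Real.sqrt_nonneg _
  have hs2 : s ^ 2 * (1 + θlo) = 1 + θhi := by
    rw [hs, Real.sq_sqrt (by positivity)]
    field_simp
  have hs1 : 1 < s := by nlinarith
  rw [sq_abs, sq_abs]
  constructor
  · intro h
    have key : (lam - 1) * s < lam + 1 := by nlinarith
    have hpos : 0 < (lam - 1) * s := mul_pos (by linarith) (by linarith)
    have k2 : ((lam - 1) * s) * ((lam - 1) * s) < (lam + 1) * (lam + 1) :=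
      mul_self_lt_mul_self (le_of_lt hpos) key
    nlinarith [mul_lt_mul_of_pos_right k2 ha]
  · intro h
    have key : (lam - 1) ^ 2 * (s ^ 2) < (lam + 1) ^ 2 := by
      have : (lam - 1) ^ 2 * (1 + θhi) < (lam + 1) ^ 2 * (1 + θlo) := by nlinarith
      nlinarith
    have key2 : (lam - 1) * s < lam + 1 := by nlinarith
    nlinarith
end

section
/- Let λ > 1 and ζ > 0, η ∈ ℝ with 2ζ - η < 0, and suppose ζ, η satisfy 1/√ζ = ((ζ-η+1)λ - ζ + 1)/(2ζ - η) and (λ-1)²(2ζ-η)² - 8ζ((ζ-η+1)λ² - (2ζ-η)λ + ζ + 1) < 0. Then √ζ ∈ (κ, 1) where κ = (√(λ²+1)√(λ²-4√2+5) - 2(√2-1)λ)/(λ²-1), and conversely if ζ ∈ (κ², 1) and η = √ζ((λ-1)ζ - 2√ζ + λ + 1)/(√ζλ - 1) then all the above conditions hold. -/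
set_option maxHeartbeats 1000000

open Real

/-- Characterization of the parameters `(ζ, η)` of 2-periodic static controllers.
For `λ > 1` and `κ := (√(λ²+1)√(λ²-4√2+5) - 2(√2-1)λ)/(λ²-1)`:
if `ζ > 0`, `2ζ - η < 0`, `1/√ζ = ((ζ-η+1)λ - ζ + 1)/(2ζ-η)` and
`(λ-1)²(2ζ-η)² - 8ζ((ζ-η+1)λ² - (2ζ-η)λ + ζ + 1) < 0`, then `√ζ ∈ (κ, 1)`;
conversely, if `ζ ∈ (κ², 1)` and `η = √ζ((λ-1)ζ - 2√ζ + λ + 1)/(√ζλ - 1)`, then all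
of these conditions hold. -/
theorem two_periodic_parameter_class (lam : ℝ) (hlam : 1 < lam)
    (κ : ℝ)
    (hκ : κ = (Real.sqrt (lam ^ 2 + 1) * Real.sqrt (lam ^ 2 - 4 * Real.sqrt 2 + 5)
        - 2 * (Real.sqrt 2 - 1) * lam) / (lam ^ 2 - 1)) :
    (∀ ζ η : ℝ, 0 < ζ → 2 * ζ - η < 0 →
        1 / Real.sqrt ζ = ((ζ - η + 1) * lam - ζ + 1) / (2 * ζ - η) →
        (lam - 1) ^ 2 * (2 * ζ - η) ^ 2
            - 8 * ζ * ((ζ - η + 1) * lam ^ 2 - (2 * ζ - η) * lam + ζ + 1) < 0 →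
        Real.sqrt ζ ∈ Set.Ioo κ 1)
    ∧ (∀ ζ η : ℝ, ζ ∈ Set.Ioo (κ ^ 2) 1 →
        η = Real.sqrt ζ * ((lam - 1) * ζ - 2 * Real.sqrt ζ + lam + 1)
              / (Real.sqrt ζ * lam - 1) →
        0 < ζ ∧ 2 * ζ - η < 0
          ∧ 1 / Real.sqrt ζ = ((ζ - η + 1) * lam - ζ + 1) / (2 * ζ - η)
          ∧ (lam - 1) ^ 2 * (2 * ζ - η) ^ 2
              - 8 * ζ * ((ζ - η + 1) * lam ^ 2 - (2 * ζ - η) * lam + ζ + 1) < 0) := by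
  have hr2 : Real.sqrt 2 ^ 2 = 2 := Real.sq_sqrt (by norm_num)
  have hr1 : (1:ℝ) < Real.sqrt 2 := by nlinarith [Real.sqrt_nonneg 2]
  set r := Real.sqrt 2 with hrdef
  have hlam0 : (0:ℝ) < lam := lt_trans one_pos hlam
  have hl1 : (0:ℝ) < lam ^ 2 - 1 := by nlinarith
  have hu2 : Real.sqrt (lam ^ 2 + 1) ^ 2 = lam ^ 2 + 1 := Real.sq_sqrt (by positivity)
  have hvnn : (0:ℝ) ≤ lam ^ 2 - 4 * r + 5 := by nlinarith
  have hv2 : Real.sqrt (lam ^ 2 - 4 * r + 5) ^ 2 = lam ^ 2 - 4 * r + 5 := Real.sq_sqrt hvnn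
  have huvnn : 0 ≤ Real.sqrt (lam ^ 2 + 1) * Real.sqrt (lam ^ 2 - 4 * r + 5) :=
    mul_nonneg (Real.sqrt_nonneg _) (Real.sqrt_nonneg _)
  have hκeq : (lam ^ 2 - 1) * κ
      = Real.sqrt (lam ^ 2 + 1) * Real.sqrt (lam ^ 2 - 4 * r + 5) - 2 * (r - 1) * lam := by
    rw [hκ]; field_simp
  have hsq : ((lam ^ 2 - 1) * κ + 2 * (r - 1) * lam) ^ 2
      = (lam ^ 2 + 1) * (lam ^ 2 - 4 * r + 5) := by
    rw [hκeq]
    linear_combination (Real.sqrt (lam ^ 2 - 4 * r + 5)) ^ 2 * hu2 + (lam ^ 2 + 1) * hv2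
  have hκ2 : (lam ^ 2 - 1) * κ ^ 2 + 4 * (r - 1) * lam * κ - (lam ^ 2 + 4 * r - 5) = 0 := by
    have hmul : (lam ^ 2 - 1) *
        ((lam ^ 2 - 1) * κ ^ 2 + 4 * (r - 1) * lam * κ - (lam ^ 2 + 4 * r - 5)) = 0 := by
      linear_combination hsq - 4 * lam ^ 2 * hr2
    exact (mul_eq_zero.mp hmul).resolve_left hl1.ne'
  have hκpos : 0 < κ := by
    by_contra h
    push_neg at h
    have hPa : Real.sqrt (lam ^ 2 + 1) * Real.sqrt (lam ^ 2 - 4 * r + 5)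
        ≤ 2 * (r - 1) * lam := by nlinarith [mul_nonpos_of_nonneg_of_nonpos hl1.le h]
    nlinarith [hsq, mul_nonneg huvnn (sub_nonneg.2 hPa), hr2, hr1, hl1, hlam0,
      mul_pos hl1 (show (0:ℝ) < lam ^ 2 + 4 * r - 5 by nlinarith)]
  have hκlam : 1 < κ * lam := by
    have hfact : (κ * lam - 1) * ((lam ^ 2 - 1) * (κ * lam + 1) + 4 * (r - 1) * lam ^ 2)
        = (lam ^ 2 - 1) ^ 2 := by linear_combination lam ^ 2 * hκ2
    have hG : 0 < (lam ^ 2 - 1) * (κ * lam + 1) + 4 * (r - 1) * lam ^ 2 := by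
      nlinarith [mul_pos hκpos hlam0, mul_pos (sub_pos.2 hr1) (pow_pos hlam0 2)]
    by_contra h
    push_neg at h
    nlinarith [hfact, hG, mul_nonneg (sub_nonneg.2 h) hG.le]
  -- key polynomial identity
  have key : ∀ s η : ℝ, η * (s * lam - 1) = s * ((lam - 1) * s ^ 2 - 2 * s + (lam + 1)) →
      ((lam - 1) ^ 2 * (2 * s ^ 2 - η) ^ 2
        - 8 * s ^ 2 * ((s ^ 2 - η + 1) * lam ^ 2 - (2 * s ^ 2 - η) * lam + s ^ 2 + 1))
        * (s * lam - 1) ^ 2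
      = s ^ 2 * ((lam ^ 2 - 1) * s ^ 2 + 4 * (r - 1) * lam * s - (lam ^ 2 + 4 * r - 5))
          * ((lam ^ 2 - 1) * s ^ 2 - 4 * (r + 1) * lam * s - (lam ^ 2 - 4 * r - 5)) := by
    intro s η hη
    linear_combination ((lam - 1) ^ 2 * (s * lam - 1) * η + (lam - 1) ^ 2 * (lam + 1) * s
      + (2 + 4 * lam - 6 * lam ^ 2) * s ^ 2 + (5 * lam ^ 3 - 3 * lam ^ 2 - lam - 1) * s ^ 3) * hη
      + (16 * s ^ 2 * (s * lam - 1) ^ 2) * hr2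
  -- f2 is negative on (1/lam, 1)
  have hf2neg : ∀ s : ℝ, 1 < s * lam → s < 1 →
      (lam ^ 2 - 1) * s ^ 2 - 4 * (r + 1) * lam * s - (lam ^ 2 - 4 * r - 5) < 0 := by
    intro s hB hs1
    have e1 : 0 < (s * lam - 1) * (1 - s) := mul_pos (by linarith) (by linarith)
    have hid : lam ^ 2 * (lam - 1) *
        ((lam ^ 2 - 1) * s ^ 2 - 4 * (r + 1) * lam * s - (lam ^ 2 - 4 * r - 5))
        = -(lam * (lam ^ 2 - 1) ^ 2 * (1 - s)) - 4 * (r + 1) * (lam - 1) * lam ^ 2 * (s * lam - 1)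
          - lam * (lam - 1) * (lam ^ 2 - 1) * ((s * lam - 1) * (1 - s)) := by ring
    have t1 : 0 < lam * (lam ^ 2 - 1) ^ 2 * (1 - s) :=
      mul_pos (mul_pos hlam0 (pow_pos hl1 2)) (by linarith)
    have t2 : 0 < 4 * (r + 1) * (lam - 1) * lam ^ 2 * (s * lam - 1) :=
      mul_pos (mul_pos (mul_pos (by linarith) (by linarith)) (pow_pos hlam0 2)) (by linarith)
    have t3 : 0 < lam * (lam - 1) * (lam ^ 2 - 1) * ((s * lam - 1) * (1 - s)) :=
      mul_pos (mul_pos (mul_pos hlam0 (by linarith)) hl1) e1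
    have hneg : lam ^ 2 * (lam - 1) *
        ((lam ^ 2 - 1) * s ^ 2 - 4 * (r + 1) * lam * s - (lam ^ 2 - 4 * r - 5)) < 0 := by
      rw [hid]; linarith
    have hpos : 0 < lam ^ 2 * (lam - 1) := mul_pos (pow_pos hlam0 2) (by linarith)
    by_contra h
    push_neg at h
    linarith [mul_nonneg hpos.le h, hneg]
  -- f1 factorization
  have hf1fact : ∀ s : ℝ,
      (lam ^ 2 - 1) * s ^ 2 + 4 * (r - 1) * lam * s - (lam ^ 2 + 4 * r - 5)
      = (s - κ) * ((lam ^ 2 - 1) * (s + κ) + 4 * (r - 1) * lam) := by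
    intro s; linear_combination hκ2
  have hGpos : ∀ s : ℝ, 0 < s → 0 < (lam ^ 2 - 1) * (s + κ) + 4 * (r - 1) * lam := by
    intro s hs
    have h1 := mul_pos hl1 (add_pos hs hκpos)
    have h2 := mul_pos (sub_pos.2 hr1) hlam0
    nlinarith [h1, h2]
  -- sign consequences of the eta relation
  have step1 : ∀ s η : ℝ, 0 < s → 2 * s ^ 2 - η < 0 →
      (s * lam - 1) * (2 * s ^ 2 - η) = (lam + 1) * s * (s ^ 2 - 1) →
      0 < s * lam - 1 ∧ s < 1 := by
    intro s η hs0 hM hMB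
    have hB : 0 < s * lam - 1 := by
      by_contra h
      push_neg at h
      have h1 : 0 ≤ -(s * lam - 1) * -(2 * s ^ 2 - η) :=
        mul_nonneg (by linarith) (by linarith)
      have hs1' : s < 1 := by
        have := mul_pos hs0 (sub_pos.2 hlam)
        nlinarith
      have h2 : 0 < (lam + 1) * s * ((1 - s) * (1 + s)) :=
        mul_pos (mul_pos (by linarith) hs0) (mul_pos (by linarith) (by linarith))
      nlinarith [h1, h2, hMB]
    refine ⟨hB, ?_⟩
    have h2 : (s * lam - 1) * (2 * s ^ 2 - η) < 0 := mul_neg_of_pos_of_neg hB hM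
    rw [hMB] at h2
    by_contra hc
    push_neg at hc
    have h3 : 0 ≤ (lam + 1) * s * (s ^ 2 - 1) := by
      have h4 : 0 ≤ (s - 1) * (s + 1) := mul_nonneg (by linarith) (by linarith)
      have h5 : 0 ≤ (lam + 1) * s := by positivity
      nlinarith [mul_nonneg h5 h4]
    linarith
  have step2 : ∀ s η : ℝ, 0 < s → s < 1 → 0 < s * lam - 1 →
      (s * lam - 1) * (2 * s ^ 2 - η) = (lam + 1) * s * (s ^ 2 - 1) →
      2 * s ^ 2 - η < 0 := by
    intro s η hs0 hs1 hB hMB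
    by_contra h
    push_neg at h
    have h1 : 0 ≤ (s * lam - 1) * (2 * s ^ 2 - η) := mul_nonneg hB.le h
    rw [hMB] at h1
    have h2 : 0 < (lam + 1) * s * ((1 - s) * (1 + s)) :=
      mul_pos (mul_pos (by linarith) hs0) (mul_pos (by linarith) (by linarith))
    nlinarith [h1, h2]
  constructor
  · -- forward direction
    intro ζ η hζ hM heq hD
    set s := Real.sqrt ζ with hs
    have hs2 : s ^ 2 = ζ := Real.sq_sqrt hζ.le
    have hs0 : 0 < s := Real.sqrt_pos.2 hζ
    rw [← hs2] at hM heq hD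
    have hM0 : 2 * s ^ 2 - η ≠ 0 := ne_of_lt hM
    rw [div_eq_div_iff (by positivity) hM0] at heq
    have hrel : η * (s * lam - 1) = s * ((lam - 1) * s ^ 2 - 2 * s + (lam + 1)) := by
      linear_combination heq
    have hMB : (s * lam - 1) * (2 * s ^ 2 - η) = (lam + 1) * s * (s ^ 2 - 1) := by
      linear_combination -hrel
    obtain ⟨hB, hs1⟩ := step1 s η hs0 hM hMB
    have hDB := key s η hrel
    have hf2 := hf2neg s (by linarith) hs1
    have hDBneg : s ^ 2 * ((lam ^ 2 - 1) * s ^ 2 + 4 * (r - 1) * lam * s - (lam ^ 2 + 4 * r - 5))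
        * ((lam ^ 2 - 1) * s ^ 2 - 4 * (r + 1) * lam * s - (lam ^ 2 - 4 * r - 5)) < 0 := by
      rw [← hDB]
      exact mul_neg_of_neg_of_pos hD (pow_pos hB 2)
    have hf1pos : 0 < (lam ^ 2 - 1) * s ^ 2 + 4 * (r - 1) * lam * s - (lam ^ 2 + 4 * r - 5) := by
      by_contra h
      push_neg at h
      have h1 : 0 ≤ s ^ 2 * (-((lam ^ 2 - 1) * s ^ 2 + 4 * (r - 1) * lam * s
          - (lam ^ 2 + 4 * r - 5)))
          * (-((lam ^ 2 - 1) * s ^ 2 - 4 * (r + 1) * lam * s - (lam ^ 2 - 4 * r - 5))) :=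
        mul_nonneg (mul_nonneg (sq_nonneg s) (by linarith)) (by linarith)
      linarith [h1, hDBneg]
    constructor
    · by_contra hc
      push_neg at hc
      rw [hf1fact s] at hf1pos
      have hG := hGpos s hs0
      linarith [mul_nonneg (sub_nonneg.2 hc) hG.le, hf1pos]
    · exact hs1
  · -- converse direction
    intro ζ η hζ hηdef
    obtain ⟨hζκ, hζ1⟩ := hζ
    have hζ0 : 0 < ζ := lt_of_le_of_lt (sq_nonneg κ) hζκ
    set s := Real.sqrt ζ with hs
    have hs2 : s ^ 2 = ζ := Real.sq_sqrt hζ0.le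
    have hs0 : 0 < s := Real.sqrt_pos.2 hζ0
    have hsκ : κ < s := by
      by_contra hc
      push_neg at hc
      have h2 : s * s ≤ κ * κ := mul_le_mul hc hc hs0.le hκpos.le
      nlinarith [hs2, hζκ]
    have hs1 : s < 1 := by
      by_contra hc
      push_neg at hc
      have h2 : 1 * 1 ≤ s * s := mul_le_mul hc hc (by norm_num) hs0.le
      nlinarith [hs2, hζ1]
    have hB : 0 < s * lam - 1 := by
      have := mul_lt_mul_of_pos_right hsκ hlam0
      linarith
    rw [← hs2] at hηdef
    rw [eq_div_iff hB.ne'] at hηdef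
    have hrel : η * (s * lam - 1) = s * ((lam - 1) * s ^ 2 - 2 * s + (lam + 1)) := by
      linear_combination hηdef
    have hMB : (s * lam - 1) * (2 * s ^ 2 - η) = (lam + 1) * s * (s ^ 2 - 1) := by
      linear_combination -hrel
    have hMneg : 2 * s ^ 2 - η < 0 := step2 s η hs0 hs1 hB hMB
    refine ⟨hζ0, ?_, ?_, ?_⟩
    · rw [← hs2]; exact hMneg
    · rw [← hs2]
      rw [div_eq_div_iff (by positivity) (ne_of_lt hMneg)]
      linear_combination hrel
    · rw [← hs2]
      have hDB := key s η hrel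
      have hf2 := hf2neg s (by linarith) hs1
      have hf1pos : 0 < (lam ^ 2 - 1) * s ^ 2 + 4 * (r - 1) * lam * s
          - (lam ^ 2 + 4 * r - 5) := by
        rw [hf1fact s]
        exact mul_pos (by linarith) (hGpos s hs0)
      have hRHSneg := mul_neg_of_pos_of_neg (mul_pos (pow_pos hs0 2) hf1pos) hf2
      rw [← hDB] at hRHSneg
      by_contra hc
      push_neg at hc
      linarith [mul_nonneg hc (sq_nonneg (s * lam - 1)), hRHSneg]
end

section
/- For every λ > 1, the value κ = (√(λ²+1)√(λ²-4√2+5) - 2(√2-1)λ)/(λ²-1) satisfies κ > 1/λ, i.e., λκ > 1. -/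
open Real

/-- For every `λ > 1`, `κ = (√(λ²+1)√(λ²-4√2+5) - 2(√2-1)λ)/(λ²-1)` satisfies
`κ > 1/λ`, i.e. `λκ > 1`. -/
theorem kappa_gt_inv_lam (lam : ℝ) (hlam : 1 < lam)
    (κ : ℝ)
    (hκ : κ = (Real.sqrt (lam ^ 2 + 1) * Real.sqrt (lam ^ 2 - 4 * Real.sqrt 2 + 5)
        - 2 * (Real.sqrt 2 - 1) * lam) / (lam ^ 2 - 1)) :
    κ > 1 / lam ∧ lam * κ > 1 := by
  have hl0 : (0:ℝ) < lam := by linarith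
  have hl2 : 0 < lam ^ 2 - 1 := by nlinarith
  have hs2 : Real.sqrt 2 ^ 2 = 2 := Real.sq_sqrt (by norm_num)
  have hsnn := Real.sqrt_nonneg 2
  have hs1 : 1 < Real.sqrt 2 := by nlinarith
  have hs3 : Real.sqrt 2 < 3/2 := by nlinarith
  have hA : (0:ℝ) ≤ lam ^ 2 + 1 := by positivity
  have hB : (0:ℝ) ≤ lam ^ 2 - 4 * Real.sqrt 2 + 5 := by nlinarith
  have hprod : Real.sqrt (lam ^ 2 + 1) * Real.sqrt (lam ^ 2 - 4 * Real.sqrt 2 + 5)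
      = Real.sqrt ((lam ^ 2 + 1) * (lam ^ 2 - 4 * Real.sqrt 2 + 5)) :=
    (Real.sqrt_mul hA _).symm
  have key : ((2 * Real.sqrt 2 - 1) * lam ^ 2 - 1) / lam
      < Real.sqrt ((lam ^ 2 + 1) * (lam ^ 2 - 4 * Real.sqrt 2 + 5)) := by
    rw [show Real.sqrt ((lam ^ 2 + 1) * (lam ^ 2 - 4 * Real.sqrt 2 + 5))
        = Real.sqrt ((lam ^ 2 + 1) * (lam ^ 2 - 4 * Real.sqrt 2 + 5)) from rfl]
    have hAB : (0:ℝ) ≤ (lam ^ 2 + 1) * (lam ^ 2 - 4 * Real.sqrt 2 + 5) :=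
      mul_nonneg hA hB
    rw [show ((2 * Real.sqrt 2 - 1) * lam ^ 2 - 1) / lam
        < Real.sqrt ((lam ^ 2 + 1) * (lam ^ 2 - 4 * Real.sqrt 2 + 5)) ↔
        (((2 * Real.sqrt 2 - 1) * lam ^ 2 - 1) / lam) ^ 2
        < (lam ^ 2 + 1) * (lam ^ 2 - 4 * Real.sqrt 2 + 5) from
      Real.lt_sqrt (div_nonneg (by nlinarith) hl0.le)]
    rw [div_pow, div_lt_iff₀ (by positivity)]
    nlinarith [sq_nonneg (lam ^ 2 - 1), pow_pos hl2 3, hs2]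
  have hnum : (lam ^ 2 - 1) / lam + 2 * (Real.sqrt 2 - 1) * lam
      = ((2 * Real.sqrt 2 - 1) * lam ^ 2 - 1) / lam := by
    field_simp; ring
  have hsqrt_gt : Real.sqrt (lam ^ 2 + 1) * Real.sqrt (lam ^ 2 - 4 * Real.sqrt 2 + 5)
      - 2 * (Real.sqrt 2 - 1) * lam > (lam ^ 2 - 1) / lam := by
    rw [hprod]
    have := key
    linarith [hnum ▸ (by linarith : (lam ^ 2 - 1) / lam + 2 * (Real.sqrt 2 - 1) * lam
      < Real.sqrt ((lam ^ 2 + 1) * (lam ^ 2 - 4 * Real.sqrt 2 + 5)) + 0)]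
  have h1ced : 1 / lam < κ := by
    rw [hκ, lt_div_iff₀ hl2, div_mul_eq_mul_div, one_mul]
    exact hsqrt_gt
  refine ⟨h1ced, ?_⟩
  have := (div_lt_iff₀ hl0).mp h1ced
  linarith [this]
end
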